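/- arXiv:1402.3796 — 2 statements merged into one kernel-verified Lean document; each statement's English description precedes it below -/
import Mathlib

section
/- Let G = (V,E) be a finite simple graph on n vertices, let H = (V,A) be an acyclic orientation of G, and let P_> ⊆ V × V be the partial order given by the transitive closure of H (so (u,v) ∈ P_> iff there is a directed path from u to v in H). Fix any function f from finite sets of output values to output values. For a bijection σ : {1,…,n} → V, define g_σ recursively by g_σ(σ(i)) = f({ g_σ(v) : v ∈ Γ(σ(i)) and σ^{-1}(v) < i }). Then for any two bijections σ and τ that are both linear extensions of P_> (i.e. σ^{-1}(u) > σ^{-1}(v) and τ^{-1}(u) > τ^{-1}(v) whenever (u,v) ∈ P_>), the outputs coincide: g_σ = g_τ. -/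
/-- Let `A` be an acyclic orientation of a finite simple graph `G` on
`n` vertices and let `P_>` be the partial order given by its transitive closure.  Let
`f` be any function from finite sets of output values to output values.  If `σ` and `τ`
are two linear extensions of `P_>` (as bijections `{1,…,n} ≃ V`, here `Fin n ≃ V`), and
`gσ`, `gτ` are the outputs of the sequential algorithm run in the orders `σ` and `τ`
respectively (i.e. the value at a vertex `u` is `f` applied to the set of values of
those neighbors of `u` that precede `u` in the respective order), then `gσ = gτ`. -/
theorem sequential_algorithm_output_independent_of_linear_extension
    {V β : Type*} [Fintype V] [DecidableEq V] [DecidableEq β]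
    (G : SimpleGraph V) [DecidableRel G.Adj]
    (n : ℕ) (hn : Fintype.card V = n)
    (A : V → V → Prop)
    (horient : ∀ u v : V, G.Adj u v ↔ (A u v ∨ A v u))
    (honeway : ∀ u v : V, ¬ (A u v ∧ A v u))
    (hacyclic : ∀ v : V, ¬ Relation.TransGen A v v)
    (f : Finset β → β)
    (σ τ : Fin n ≃ V)
    (hσ : ∀ u v : V, Relation.TransGen A u v → σ.symm v < σ.symm u)
    (hτ : ∀ u v : V, Relation.TransGen A u v → τ.symm v < τ.symm u)
    (gσ gτ : V → β)
    (hgσ : ∀ u : V, gσ u =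
      f (((G.neighborFinset u).filter (fun v => σ.symm v < σ.symm u)).image gσ))
    (hgτ : ∀ u : V, gτ u =
      f (((G.neighborFinset u).filter (fun v => τ.symm v < τ.symm u)).image gτ)) :
    gσ = gτ := by
  classical
  -- For any linear extension, a neighbor precedes `u` iff the edge points into `u`.
  have hfilt : ∀ (ρ : Fin n ≃ V), (∀ u v : V, Relation.TransGen A u v → ρ.symm v < ρ.symm u) →
      ∀ u : V, (G.neighborFinset u).filter (fun v => ρ.symm v < ρ.symm u)
        = (G.neighborFinset u).filter (fun v => A u v) := by
    intro ρ hρ u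
    ext v
    simp only [Finset.mem_filter, SimpleGraph.mem_neighborFinset]
    constructor
    · rintro ⟨hadj, hlt⟩
      refine ⟨hadj, ?_⟩
      rcases (horient u v).1 hadj with h | h
      · exact h
      · exact absurd hlt (not_lt.2 (le_of_lt (hρ v u (Relation.TransGen.single h))))
    · rintro ⟨hadj, h⟩
      exact ⟨hadj, hρ u v (Relation.TransGen.single h)⟩
  funext u
  -- strong induction on the position of `u` in `σ`
  have key : ∀ k : ℕ, ∀ u : V, (σ.symm u : ℕ) = k → gσ u = gτ u := by
    intro k
    induction k using Nat.strong_induction_on with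
    | _ k ih =>
      intro u hk
      rw [hgσ u, hgτ u, hfilt σ hσ u, hfilt τ hτ u]
      congr 1
      apply Finset.image_congr
      intro v hv
      simp only [Finset.coe_filter, Set.mem_setOf_eq, SimpleGraph.mem_neighborFinset] at hv
      exact ih (σ.symm v) (hk ▸ hσ u v (Relation.TransGen.single hv.2)) v rfl
  exact key (σ.symm u) u rfl
end

section
/- Let M be a matching in a finite simple graph G, let k be the length of a shortest M-augmenting path in G, and let P* be a maximal (with respect to inclusion) set of pairwise vertex-disjoint M-augmenting paths of length k. Then M ⊕ E(P*) is a matching, and every (M ⊕ E(P*))-augmenting path has length at least k + 2. -/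
/-!
Augmenting a matching along vertex-disjoint augmenting paths keeps it a matching and adds one
edge per path, so `M' = M ⊕ E(P)` is a matching with `|M| + m` edges. Let `q` be an
`M'`-augmenting path. If `q` avoids the paths of `P`, it is `M`-augmenting, and maximality of `P`
together with parity gives `|q| ≥ k + 2`. Otherwise `q` shares an edge with `P`, because every
vertex of `P` is matched in `M'` by an edge of `P`. Then `M'' = M' ⊕ E(q)` has `|M| + m + 1` edges,
and `(m + 1) k ≤ |M ⊕ M''| = |E(P) ⊕ E(q)| ≤ m k + |q| - 2`.

The lower bound is the exchange argument: if `|A| < |B|` then `A ⊕ B` contains an `A`-augmenting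
path, whose removal from `B` lowers `|B|` by one, so `|A| + t ≤ |B|` forces `A ⊕ B` to contain `t`
edge-disjoint `A`-augmenting paths. The path is found by following alternating paths from the
`A`-free, `B`-covered vertices: if none of them ends in an augmenting path, each gets stuck at an
`A`-covered, `B`-free vertex, distinct starts get stuck at distinct vertices, and there are fewer
vertices of the second kind.
-/

/-- The set of vertices covered by a set `M` of edges. -/
def coveredVerts {V : Type*} (M : Set (Sym2 V)) : Set V := {x : V | ∃ e ∈ M, x ∈ e}

/-- `M` is a matching in `G`: a set of edges of `G` that are pairwise non-adjacent. -/
def IsMatchingSet {V : Type*} (G : SimpleGraph V) (M : Set (Sym2 V)) : Prop :=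
  M ⊆ G.edgeSet ∧ ∀ e ∈ M, ∀ f ∈ M, e ≠ f → ∀ x : V, x ∈ e → x ∉ f

/-- `p` is an `M`-augmenting path: a simple path with at least one edge, both of whose
endpoints are `M`-free, and whose edges alternate between `E ∖ M` and `M` (the edge at
position `i` belongs to `M` iff `i` is odd). -/
def IsAugPath {V : Type*} (G : SimpleGraph V) (M : Set (Sym2 V)) {u v : V}
    (p : G.Walk u v) : Prop :=
  p.IsPath ∧ 0 < p.length ∧ u ∉ coveredVerts M ∧ v ∉ coveredVerts M ∧
    ∀ (i : ℕ) (h : i < p.edges.length), (p.edges.get ⟨i, h⟩ ∈ M ↔ Odd i)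

/-- An `M`-augmenting path in `G`, bundled with its endpoints. -/
structure AugPath {V : Type*} (G : SimpleGraph V) (M : Set (Sym2 V)) where
  src : V
  tgt : V
  walk : G.Walk src tgt
  isAug : IsAugPath G M walk

/-- Two bundled augmenting paths are vertex-disjoint. -/
def AugPath.VDisj {V : Type*} {G : SimpleGraph V} {M M' : Set (Sym2 V)}
    (p : AugPath G M) (q : AugPath G M') : Prop :=
  ∀ x : V, x ∈ p.walk.support → x ∉ q.walk.support

/-- `E(P)`: the set of edges appearing in a (finite) family `P` of augmenting paths. -/
def famEdges {V : Type*} {G : SimpleGraph V} {M : Set (Sym2 V)} {m : ℕ}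
    (P : Fin m → AugPath G M) : Set (Sym2 V) :=
  {e : Sym2 V | ∃ i : Fin m, e ∈ (P i).walk.edges}

lemma Set.ncard_symmDiff_add_two_mul_ncard_inter {α : Type*} [Finite α] (s t : Set α) :
    (symmDiff s t).ncard + 2 * (s ∩ t).ncard = s.ncard + t.ncard := by
  have hsub : s ∩ t ⊆ s ∪ t := Set.inter_subset_left.trans Set.subset_union_left
  have hle : (s ∩ t).ncard ≤ (s ∪ t).ncard := Set.ncard_le_ncard hsub
  rw [symmDiff_eq_sup_sdiff_inf]
  change ((s ∪ t) \ (s ∩ t)).ncard + _ = _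
  rw [Set.ncard_sdiff hsub, ← Set.ncard_union_add_ncard_inter s t]
  omega

lemma Nat.exists_and_not_succ_of_forall_lt {P : ℕ → Prop} (h0 : P 0) {N : ℕ}
    (hN : ∀ n, P n → n < N) : ∃ n, P n ∧ ¬ P (n + 1) := by
  by_contra! h
  exact lt_irrefl N (hN N (Nat.rec (motive := P) h0 h N))

open SimpleGraph

section

variable {V : Type*} {G : SimpleGraph V} {C : Set (Sym2 V)} {u v w x : V}

lemma IsMatchingSet.eq_of_mem (hC : IsMatchingSet G C) {e f : Sym2 V}
    (he : e ∈ C) (hf : f ∈ C) (hxe : x ∈ e) (hxf : x ∈ f) : e = f := by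
  by_contra hne
  exact hC.2 e he f hf hne x hxe hxf

lemma IsMatchingSet.ncard_coveredVerts [Finite V] (hC : IsMatchingSet G C) :
    (coveredVerts C).ncard = 2 * C.ncard := by
  have hcov : coveredVerts C = ⋃ e ∈ C, {x | x ∈ e} := by
    ext x
    simp [coveredVerts]
  have hpair : ∀ e ∈ C, {x | x ∈ e}.ncard = 2 := by
    intro e he
    induction e with
    | h a b =>
      have hab : a ≠ b := G.ne_of_adj (hC.1 he)
      rw [show {x | x ∈ s(a, b)} = {a, b} by ext; simp, Set.ncard_pair hab]
  have hdisj : C.PairwiseDisjoint fun e => {x | x ∈ e} := fun e he f hf hne =>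
    Set.disjoint_left.2 fun x hxe hxf => hC.2 e he f hf hne x hxe hxf
  rw [hcov, (Set.toFinite C).ncard_biUnion (fun _ _ => Set.toFinite _) hdisj,
    finsum_mem_congr rfl hpair, ← finsum_one, mul_finsum_mem, mul_one]

namespace SimpleGraph.Walk

lemma mem_edges_iff_exists_getVert {p : G.Walk u v} {e : Sym2 V} :
    e ∈ p.edges ↔ ∃ i < p.length, s(p.getVert i, p.getVert (i + 1)) = e := by
  rw [List.mem_iff_getElem]
  constructor
  · rintro ⟨i, hi, rfl⟩
    exact ⟨i, by simpa using hi, (getElem_edges hi).symm⟩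
  · rintro ⟨i, hi, rfl⟩
    exact ⟨i, by simpa using hi, getElem_edges _⟩

lemma mk_getVert_mem_edges {p : G.Walk u v} {i : ℕ} (hi : i < p.length) :
    s(p.getVert i, p.getVert (i + 1)) ∈ p.edges :=
  mem_edges_iff_exists_getVert.2 ⟨i, hi, rfl⟩

lemma IsPath.getVert_mem_iff {p : G.Walk u v} (hp : p.IsPath) {i s : ℕ} (hi : i < p.length)
    (hs : s ≤ p.length) : p.getVert s ∈ s(p.getVert i, p.getVert (i + 1)) ↔ s = i ∨ s = i + 1 := by
  have hinj := hp.getVert_injOn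
  rw [Sym2.mem_iff]
  constructor
  · rintro (h | h)
    · exact .inl (hinj hs hi.le h)
    · exact .inr (hinj hs hi h)
  · rintro (rfl | rfl) <;> simp

def Alternates (C : Set (Sym2 V)) (par : ℕ) (p : G.Walk u v) : Prop :=
  ∀ i < p.length, s(p.getVert i, p.getVert (i + 1)) ∈ C ↔ Odd (i + par)

variable {par : ℕ}

lemma Alternates.compl {p : G.Walk u v} (hp : p.Alternates C par) :
    p.Alternates Cᶜ (par + 1) :=
  fun i hi => by rw [Set.mem_compl_iff, hp i hi, ← add_assoc, Nat.odd_add_one]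

lemma Alternates.tail {h : G.Adj u w} {p : G.Walk w v} (hp : (cons h p).Alternates C par) :
    p.Alternates C (par + 1) ∧ (s(u, w) ∈ C ↔ Odd par) := by
  refine ⟨fun i hi => ?_, by simpa using hp 0 (by simp)⟩
  have := hp (i + 1) (by simpa using hi)
  rwa [getVert_cons_succ, getVert_cons_succ, add_right_comm, add_assoc] at this

lemma getVert_concat_of_le (p : G.Walk u v) (h : G.Adj v w) {i : ℕ} (hi : i ≤ p.length) :
    (p.concat h).getVert i = p.getVert i := by
  rw [concat_eq_append, getVert_append', if_pos hi]

lemma Alternates.concat {p : G.Walk u v} (hp : p.Alternates C par) (h : G.Adj v w)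
    (hC : s(v, w) ∈ C ↔ Odd (p.length + par)) : (p.concat h).Alternates C par := by
  intro i hi
  rw [length_concat] at hi
  rcases Nat.lt_succ_iff_lt_or_eq.1 hi with hi | rfl
  · rw [getVert_concat_of_le _ _ hi.le, getVert_concat_of_le _ _ hi]
    exact hp i hi
  · have hw : (p.concat h).getVert (p.length + 1) = w := by
      simpa using (p.concat h).getVert_length
    rwa [getVert_concat_of_le _ _ le_rfl, hw, getVert_length]

lemma Alternates.reverse {p : G.Walk u v} (hp : p.Alternates C par) :
    p.reverse.Alternates C (p.length + 1 + par) := by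
  intro i hi
  rw [length_reverse] at hi
  have h := hp (p.length - (i + 1)) (by omega)
  rw [show p.length - (i + 1) + 1 = p.length - i by omega] at h
  rw [getVert_reverse, getVert_reverse, Sym2.eq_swap, h, Nat.odd_iff, Nat.odd_iff]
  omega

lemma Alternates.exists_mem_edge {p : G.Walk u v} (hp : p.Alternates C par)
    (hpos : 0 < p.length) {s : ℕ} (hs : s ≤ p.length) (h0 : s = 0 → Odd par)
    (hL : s = p.length → Odd (p.length - 1 + par)) :
    ∃ j < p.length, s(p.getVert j, p.getVert (j + 1)) ∈ C ∧
      p.getVert s ∈ s(p.getVert j, p.getVert (j + 1)) := by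
  by_cases hs' : s < p.length ∧ Odd (s + par)
  · exact ⟨s, hs'.1, (hp s hs'.1).2 hs'.2, Sym2.mem_mk_left _ _⟩
  · have hodd : Odd (s - 1 + par) ∧ 0 < s := by
      rcases Nat.eq_zero_or_pos s with rfl | hpos'
      · exact absurd ⟨hpos, by simpa using h0 rfl⟩ hs'
      rcases eq_or_lt_of_le hs with rfl | hlt
      · exact ⟨hL rfl, hpos'⟩
      · have : ¬ Odd (s + par) := fun h => hs' ⟨hlt, h⟩
        simp only [Nat.odd_iff] at this ⊢
        omega
    refine ⟨s - 1, by omega, (hp _ (by omega)).2 hodd.1, ?_⟩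
    rw [Nat.sub_add_cancel hodd.2]
    exact Sym2.mem_mk_right _ _

lemma Alternates.mem_edges_of_mem {p : G.Walk u v} (hC : IsMatchingSet G C)
    (hp : p.Alternates C par) (hpos : 0 < p.length) {s : ℕ} (hs : s ≤ p.length)
    (h0 : s = 0 → Odd par) (hL : s = p.length → Odd (p.length - 1 + par)) {f : Sym2 V}
    (hf : f ∈ C) (hsf : p.getVert s ∈ f) : f ∈ p.edges := by
  obtain ⟨j, hj, hjC, hsj⟩ := hp.exists_mem_edge hpos hs h0 hL
  rw [hC.eq_of_mem hf hjC hsf hsj]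
  exact mk_getVert_mem_edges hj

lemma IsPath.ncard_edgeSet {p : G.Walk u v} (hp : p.IsPath) : p.edgeSet.ncard = p.length := by
  classical
  rw [← coe_edges_toFinset, Set.ncard_coe_finset, List.toFinset_card_of_nodup hp.edges_nodup,
    length_edges]

lemma Alternates.ncard_edgeSet_inter {p : G.Walk u v} (hp : p.IsPath)
    (halt : p.Alternates C par) :
    (p.edgeSet ∩ C).ncard = (p.length + par % 2) / 2 := by
  induction p generalizing par with
  | nil => simp only [edgeSet_nil, Set.empty_inter, Set.ncard_empty, length_nil]; omega
  | @cons a b c h p ih =>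
    rw [cons_isPath_iff] at hp
    obtain ⟨htail, hhead⟩ := halt.tail
    have hfin : (p.edgeSet ∩ C).Finite := (List.finite_toSet _).inter_of_left C
    rw [edgeSet_cons, length_cons]
    by_cases hab : s(a, b) ∈ C
    · have hnot : s(a, b) ∉ p.edgeSet ∩ C :=
        fun he => hp.2 (p.fst_mem_support_of_mem_edges he.1)
      have hpar := hhead.1 hab
      rw [Set.insert_inter_of_mem hab, Set.ncard_insert_of_notMem hnot hfin, ih hp.1 htail]
      rw [Nat.odd_iff] at hpar
      omega
    · have hpar : ¬ Odd par := fun h => hab (hhead.2 h)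
      rw [Set.insert_inter_of_notMem hab, ih hp.1 htail]
      rw [Nat.odd_iff] at hpar
      omega

lemma getVert_eq_of_forall_mem {S : ℕ → Set (Sym2 V)} (hS : ∀ i, IsMatchingSet G (S i))
    {p : G.Walk u v} {q : G.Walk u w}
    (hp : ∀ i < p.length, s(p.getVert i, p.getVert (i + 1)) ∈ S i)
    (hq : ∀ i < q.length, s(q.getVert i, q.getVert (i + 1)) ∈ S i) :
    ∀ i ≤ p.length, i ≤ q.length → p.getVert i = q.getVert i
  | 0, _, _ => by simp
  | i + 1, hip, hiq => by
    have ih := getVert_eq_of_forall_mem hS hp hq i (by omega) (by omega)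
    have h := (hS i).eq_of_mem (hp i hip) (hq i hiq) (Sym2.mem_mk_left _ _)
      (ih ▸ Sym2.mem_mk_left _ _)
    rw [ih] at h
    exact Sym2.congr_right.1 h

/-- `A` is the matching the next edge `f` must come from; `hstart` and `hnil` keep `f` from
returning to the start `u` and, when `p` is trivial, from lying in `B`. -/
lemma exists_concat_alternates {A B : Set (Sym2 V)} (hA : IsMatchingSet G A)
    (hB : IsMatchingSet G B) {a b : ℕ} (hab : Odd (a + b)) {p : G.Walk u x} (hp : p.IsPath)
    (hpA : p.Alternates A a) (hpB : p.Alternates B b) (hL : Odd (p.length + a)) {f : Sym2 V}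
    (hf : f ∈ A) (hxf : x ∈ f) (hstart : Odd a ∨ u ∉ coveredVerts A)
    (hnil : p.length = 0 → u ∉ coveredVerts B) :
    ∃ (y : V) (q : G.Walk u y), q.IsPath ∧ q.Alternates A a ∧ q.Alternates B b ∧
      q.length = p.length + 1 := by
  obtain ⟨y, rfl⟩ := Sym2.mem_iff_exists.1 hxf
  have hxy : G.Adj x y := hA.1 hf
  simp only [Nat.odd_iff] at hab hL
  -- the last edge of `p` is not in `A`, so `s(x, y)` is not on `p` at all
  have hfp : s(x, y) ∉ p.edges := by
    intro hmem
    obtain ⟨j, hj, hje⟩ := mem_edges_iff_exists_getVert.1 hmem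
    have hjx := (hp.getVert_mem_iff hj le_rfl).1
      (by rw [getVert_length, hje]; exact Sym2.mem_mk_left _ _)
    have hjA := Nat.odd_iff.1 ((hpA j hj).1 (hje ▸ hf))
    omega
  have hy : y ∉ p.support := by
    intro hy
    obtain ⟨s, rfl, hs⟩ := mem_support_iff_exists_getVert.1 hy
    have hsL : s ≠ p.length := fun h => hxy.ne (by rw [h, getVert_length])
    by_cases hs0 : s = 0 ∧ ¬ Odd a
    · refine hstart.resolve_left hs0.2 ⟨_, hf, ?_⟩
      simp [hs0.1]
    · exact hfp (hpA.mem_edges_of_mem hA (by omega) hs (fun h => by tauto)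
        (fun h => absurd h hsL) hf (Sym2.mem_mk_right _ _))
  have hfB : s(x, y) ∉ B := by
    intro hfB
    rcases Nat.eq_zero_or_pos p.length with h0 | hpos
    · exact hnil h0 ⟨_, hfB, eq_of_length_eq_zero h0 ▸ Sym2.mem_mk_left _ _⟩
    · have hlast := (hpB (p.length - 1) (by omega)).2 (Nat.odd_iff.2 (by omega))
      rw [Nat.sub_add_cancel hpos, getVert_length] at hlast
      have hmem := mk_getVert_mem_edges (p := p) (i := p.length - 1) (by omega)
      rw [Nat.sub_add_cancel hpos, getVert_length] at hmem
      exact hfp (hB.eq_of_mem hfB hlast (Sym2.mem_mk_left _ _) (Sym2.mem_mk_right _ _) ▸ hmem)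
  refine ⟨y, p.concat hxy, hp.concat hy hxy, hpA.concat hxy (iff_of_true hf (Nat.odd_iff.2 hL)),
    hpB.concat hxy (iff_of_false hfB ?_), length_concat p hxy⟩
  rw [Nat.odd_iff]
  omega

end SimpleGraph.Walk

open Walk

lemma IsMatchingSet.symmDiff_edgeSet (hC : IsMatchingSet G C) {p : G.Walk u v}
    (hp : p.IsPath) {par : ℕ} (halt : p.Alternates C par)
    (hclosed : ∀ f ∈ C, ∀ x ∈ f, x ∈ p.support → f ∈ p.edges) :
    IsMatchingSet G (symmDiff C p.edgeSet) := by
  refine ⟨fun e he => ?_, fun e he f hf hne x hxe hxf => ?_⟩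
  · rcases Set.mem_symmDiff.1 he with ⟨h, -⟩ | ⟨h, -⟩
    exacts [hC.1 h, p.edges_subset_edgeSet h]
  have avoid : ∀ e ∈ C, e ∉ p.edgeSet → ∀ f ∈ p.edgeSet, x ∈ e → x ∉ f :=
    fun e he hep f hf hxe hxf => hep (hclosed e he x hxe (mem_support_of_mem_edges hf hxf))
  rcases Set.mem_symmDiff.1 he with ⟨he1, he2⟩ | ⟨he1, he2⟩ <;>
    rcases Set.mem_symmDiff.1 hf with ⟨hf1, hf2⟩ | ⟨hf1, hf2⟩
  · exact hne (hC.eq_of_mem he1 hf1 hxe hxf)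
  · exact avoid e he1 he2 f hf1 hxe hxf
  · exact avoid f hf1 hf2 e he1 hxf hxe
  -- distinct edges of a path that share a vertex are consecutive, so one of them lies in `C`
  obtain ⟨i, hi, rfl⟩ := mem_edges_iff_exists_getVert.1 he1
  obtain ⟨j, hj, rfl⟩ := mem_edges_iff_exists_getVert.1 hf1
  obtain ⟨s, hs, rfl⟩ : ∃ s ≤ p.length, p.getVert s = x := by
    rcases Sym2.mem_iff.1 hxe with rfl | rfl
    exacts [⟨i, hi.le, rfl⟩, ⟨i + 1, hi, rfl⟩]
  rw [hp.getVert_mem_iff hi hs] at hxe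
  rw [hp.getVert_mem_iff hj hs] at hxf
  have hij : i ≠ j := by rintro rfl; exact hne rfl
  have hi' : ¬ Odd (i + par) := fun h => he2 ((halt i hi).2 h)
  have hj' : ¬ Odd (j + par) := fun h => hf2 ((halt j hj).2 h)
  simp only [Nat.odd_iff] at hi' hj'
  omega

lemma isAugPath_iff {p : G.Walk u v} :
    IsAugPath G C p ↔ p.IsPath ∧ 0 < p.length ∧ u ∉ coveredVerts C ∧ v ∉ coveredVerts C ∧
      p.Alternates C 0 := by
  simp only [IsAugPath, Alternates, List.get_eq_getElem, getElem_edges, length_edges, add_zero]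

lemma IsAugPath.odd_length {p : G.Walk u v} (hp : IsAugPath G C p) : Odd p.length := by
  obtain ⟨-, hpos, -, hv, halt⟩ := isAugPath_iff.1 hp
  by_contra heven
  refine hv ⟨_, (halt (p.length - 1) (by omega)).2 ?_, ?_⟩
  · rw [Nat.not_odd_iff_even, Nat.even_iff] at heven
    rw [Nat.odd_iff]
    omega
  · rw [Nat.sub_add_cancel hpos, getVert_length]
    exact Sym2.mem_mk_right _ _

lemma IsAugPath.mem_edges_of_mem (hC : IsMatchingSet G C) {p : G.Walk u v}
    (hp : IsAugPath G C p) {f : Sym2 V} (hf : f ∈ C) (hxf : x ∈ f) (hx : x ∈ p.support) :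
    f ∈ p.edges := by
  obtain ⟨-, hpos, hu, hv, halt⟩ := isAugPath_iff.1 hp
  obtain ⟨s, rfl, hs⟩ := mem_support_iff_exists_getVert.1 hx
  refine halt.mem_edges_of_mem hC hpos hs (fun h0 => ?_) (fun hL => ?_) hf hxf
  · rw [h0, getVert_zero] at hxf
    exact absurd ⟨f, hf, hxf⟩ hu
  · rw [hL, getVert_length] at hxf
    exact absurd ⟨f, hf, hxf⟩ hv

lemma IsAugPath.symmDiff_edgeSet [Finite V] (hC : IsMatchingSet G C) {p : G.Walk u v}
    (hp : IsAugPath G C p) :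
    IsMatchingSet G (symmDiff C p.edgeSet) ∧ (symmDiff C p.edgeSet).ncard = C.ncard + 1 := by
  obtain ⟨hpath, -, -, -, halt⟩ := isAugPath_iff.1 hp
  refine ⟨hC.symmDiff_edgeSet hpath halt fun f hf _ hxf hx => hp.mem_edges_of_mem hC hf hxf hx,
    ?_⟩
  have hcount := Set.ncard_symmDiff_add_two_mul_ncard_inter C p.edgeSet
  rw [hpath.ncard_edgeSet, Set.inter_comm, halt.ncard_edgeSet_inter hpath] at hcount
  have hodd := hp.odd_length
  rw [Nat.odd_iff] at hodd
  omega

lemma IsMatchingSet.symmDiff_edgeSet_of_alternates_one [Finite V] (hC : IsMatchingSet G C)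
    {p : G.Walk u v} (hp : p.IsPath) (halt : p.Alternates C 1) (hodd : Odd p.length) :
    IsMatchingSet G (symmDiff C p.edgeSet) ∧ (symmDiff C p.edgeSet).ncard + 1 = C.ncard := by
  have hpos : 0 < p.length := hodd.pos
  refine ⟨hC.symmDiff_edgeSet hp halt fun f hf x hxf hx => ?_, ?_⟩
  · obtain ⟨s, rfl, hs⟩ := mem_support_iff_exists_getVert.1 hx
    exact halt.mem_edges_of_mem hC hpos hs (fun _ => odd_one)
      (fun _ => by rwa [Nat.sub_add_cancel hpos]) hf hxf
  have hcount := Set.ncard_symmDiff_add_two_mul_ncard_inter C p.edgeSet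
  rw [hp.ncard_edgeSet, Set.inter_comm, halt.ncard_edgeSet_inter hp] at hcount
  rw [Nat.odd_iff] at hodd
  omega

lemma IsAugPath.symmDiff_of_forall_notMem {p : G.Walk u v} (hp : IsAugPath G C p)
    {F : Set (Sym2 V)} (hF : ∀ e ∈ F, ∀ x ∈ e, x ∉ p.support) :
    IsAugPath G (symmDiff C F) p := by
  obtain ⟨hpath, hpos, hu, hv, halt⟩ := isAugPath_iff.1 hp
  have hfree : ∀ x ∈ p.support, x ∉ coveredVerts C → x ∉ coveredVerts (symmDiff C F) := by
    rintro x hx hxC ⟨f, hf, hxf⟩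
    rcases Set.mem_symmDiff.1 hf with ⟨hfC, -⟩ | ⟨hfF, -⟩
    exacts [hxC ⟨f, hfC, hxf⟩, hF f hfF x hxf hx]
  refine isAugPath_iff.2 ⟨hpath, hpos, hfree _ p.start_mem_support hu,
    hfree _ p.end_mem_support hv, fun i hi => ?_⟩
  have hiF : s(p.getVert i, p.getVert (i + 1)) ∉ F :=
    fun h => hF _ h _ (Sym2.mem_mk_left _ _) (p.getVert_mem_support i)
  rw [← halt i hi, Set.mem_symmDiff]
  tauto

lemma IsAugPath.exists_mem_edges_notMem {p : G.Walk u v} (hp : IsAugPath G C p)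
    (hx : x ∈ p.support) : ∃ e ∈ p.edges, e ∉ C ∧ x ∈ e := by
  obtain ⟨-, hpos, -, -, halt⟩ := isAugPath_iff.1 hp
  obtain ⟨s, rfl, hs⟩ := mem_support_iff_exists_getVert.1 hx
  obtain ⟨j, hj, hjC, hsj⟩ := halt.compl.exists_mem_edge hpos hs (fun _ => odd_one)
    (fun _ => by rw [Nat.sub_add_cancel hpos]; exact hp.odd_length)
  exact ⟨_, mk_getVert_mem_edges hj, hjC, hsj⟩

lemma famEdges_eq_iUnion {m : ℕ} (P : Fin m → AugPath G C) :
    famEdges P = ⋃ i, (P i).walk.edgeSet := by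
  ext e
  simp [famEdges]

lemma ncard_famEdges_le {m : ℕ} (P : Fin m → AugPath G C) :
    (famEdges P).ncard ≤ ∑ i, (P i).walk.length := by
  rw [famEdges_eq_iUnion]
  refine (Set.ncard_iUnion_le_of_fintype _).trans_eq (Finset.sum_congr rfl fun i _ => ?_)
  exact (P i).isAug.1.ncard_edgeSet

lemma IsMatchingSet.symmDiff_famEdges [Finite V] (hC : IsMatchingSet G C) :
    ∀ {m : ℕ} (P : Fin m → AugPath G C), (∀ i j, i ≠ j → (P i).VDisj (P j)) →
      IsMatchingSet G (symmDiff C (famEdges P)) ∧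
        (symmDiff C (famEdges P)).ncard = C.ncard + m
  | 0, P, _ => by
    have hP : famEdges P = ∅ := Set.eq_empty_of_forall_notMem fun e ⟨i, _⟩ => i.elim0
    rw [hP, ← Set.bot_eq_empty, symmDiff_bot]
    exact ⟨hC, rfl⟩
  | m + 1, P, hdisj => by
    set Q : Fin m → AugPath G C := fun i => P i.succ
    obtain ⟨hQ, hQcard⟩ := hC.symmDiff_famEdges Q fun i j hij =>
      hdisj _ _ ((Fin.succ_injective _).ne hij)
    have hoff : ∀ e ∈ famEdges Q, ∀ x ∈ e, x ∉ (P 0).walk.support :=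
      fun e ⟨i, hi⟩ x hxe hx =>
        hdisj 0 i.succ (Fin.succ_ne_zero i).symm x hx (mem_support_of_mem_edges hi hxe)
    have hdisj0 : Disjoint (famEdges Q) (P 0).walk.edgeSet :=
      Set.disjoint_left.2 fun e he he0 =>
        hoff e he _ (Sym2.out_fst_mem e) (mem_support_of_mem_edges he0 (Sym2.out_fst_mem e))
    have hsplit : famEdges P = symmDiff (famEdges Q) (P 0).walk.edgeSet := by
      rw [hdisj0.symmDiff_eq_sup]
      ext e
      simp only [famEdges, Fin.exists_fin_succ, Set.mem_ofPred_eq, Set.sup_eq_union,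
        Set.mem_union, Walk.mem_edgeSet, Q]
      tauto
    obtain ⟨h1, h2⟩ := ((P 0).isAug.symmDiff_of_forall_notMem hoff).symmDiff_edgeSet hQ
    rw [hsplit, ← symmDiff_assoc]
    exact ⟨h1, by rw [h2, hQcard, add_assoc]⟩

section Exchange

variable {A B : Set (Sym2 V)}

lemma exists_even_alternates_of_forall_not_alternates [Fintype V] (hA : IsMatchingSet G A)
    (hB : IsMatchingSet G B) (hno : ∀ p : AugPath G A, ¬ p.walk.Alternates B 1)
    (hvB : v ∈ coveredVerts B) (hvA : v ∉ coveredVerts A) :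
    ∃ x ∈ coveredVerts A \ coveredVerts B, ∃ p : G.Walk v x,
      Even p.length ∧ p.Alternates A 0 ∧ p.Alternates B 1 := by
  obtain ⟨n, ⟨x, p, hp, hpA, hpB, rfl⟩, hmax⟩ := Nat.exists_and_not_succ_of_forall_lt
    (P := fun n => ∃ (x : V) (p : G.Walk v x),
      p.IsPath ∧ p.Alternates A 0 ∧ p.Alternates B 1 ∧ p.length = n)
    ⟨v, nil, .nil, fun _ hi => absurd hi (Nat.not_lt_zero _),
      fun _ hi => absurd hi (Nat.not_lt_zero _), rfl⟩
    fun n ⟨x, p, hp, _, _, hn⟩ => hn ▸ hp.length_lt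
  rcases Nat.even_or_odd p.length with heven | hodd
  · have hxB : x ∉ coveredVerts B := fun ⟨f, hf, hxf⟩ => by
      obtain ⟨y, q, hq, hqB, hqA, hlen⟩ := exists_concat_alternates hB hA (a := 1) (b := 0)
        odd_one hp hpB hpA (Even.add_one heven) hf hxf (.inl odd_one) fun _ => hvA
      exact hmax ⟨y, q, hq, hqA, hqB, hlen⟩
    have hpos : 0 < p.length := by
      refine Nat.pos_of_ne_zero fun h0 => hxB ?_
      rwa [← eq_of_length_eq_zero h0]
    refine ⟨x, ⟨⟨_, (hpA (p.length - 1) (by omega)).2 ?_, ?_⟩, hxB⟩, p, heven, hpA, hpB⟩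
    · rw [Nat.even_iff] at heven
      rw [Nat.odd_iff]
      omega
    · rw [Nat.sub_add_cancel hpos, getVert_length]
      exact Sym2.mem_mk_right _ _
  · by_cases hxA : x ∈ coveredVerts A
    · obtain ⟨f, hf, hxf⟩ := hxA
      obtain ⟨y, q, hq, hqA, hqB, hlen⟩ := exists_concat_alternates hA hB (a := 0) (b := 1)
        odd_one hp hpA hpB hodd hf hxf (.inr hvA) fun h => absurd h hodd.pos.ne'
      exact absurd ⟨y, q, hq, hqA, hqB, hlen⟩ hmax
    · exact absurd hpB (hno ⟨v, x, p, isAugPath_iff.2 ⟨hp, hodd.pos, hvA, hxA, hpA⟩⟩)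

lemma eq_of_even_alternates (hA : IsMatchingSet G A) (hB : IsMatchingSet G B)
    {v₁ v₂ x₁ x₂ : V} {p₁ : G.Walk v₁ x₁} {p₂ : G.Walk v₂ x₂} (hx : x₁ = x₂)
    (h₁ : Even p₁.length) (hp₁A : p₁.Alternates A 0) (hp₁B : p₁.Alternates B 1)
    (h₂ : Even p₂.length) (hp₂A : p₂.Alternates A 0) (hp₂B : p₂.Alternates B 1)
    (hv₁ : v₁ ∉ coveredVerts A) (hv₂ : v₂ ∉ coveredVerts A) : v₁ = v₂ := by
  subst hx
  wlog hle : p₁.length ≤ p₂.length generalizing v₁ v₂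
  · exact (this h₂ hp₂A hp₂B hv₂ hv₁ h₁ hp₁A hp₁B (by omega)).symm
  set S : ℕ → Set (Sym2 V) := fun i => if Even i then A else B
  have hS : ∀ i, IsMatchingSet G (S i) := fun i => by
    by_cases h : Even i
    · simpa [S, h] using hA
    · simpa [S, h] using hB
  -- read backwards from the common end, both paths are forced to follow the same edges
  have hrev : ∀ {y : V} (p : G.Walk y x₁), Even p.length → p.Alternates A 0 →
      p.Alternates B 1 → ∀ i < p.reverse.length,
        s(p.reverse.getVert i, p.reverse.getVert (i + 1)) ∈ S i := by
    intro y p hev hpA hpB i hi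
    rw [Nat.even_iff] at hev
    by_cases h : Even i
    · rw [Nat.even_iff] at h
      simp only [S, Nat.even_iff, h, if_true]
      exact (hpA.reverse i hi).2 (by rw [Nat.odd_iff]; omega)
    · rw [Nat.even_iff] at h
      simp only [S, Nat.even_iff, h, if_false]
      exact (hpB.reverse i hi).2 (by rw [Nat.odd_iff]; omega)
  have key := getVert_eq_of_forall_mem hS (hrev p₁ h₁ hp₁A hp₁B) (hrev p₂ h₂ hp₂A hp₂B)
    p₁.length (by simp) (by simpa)
  rw [getVert_reverse, getVert_reverse, Nat.sub_self, getVert_zero] at key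
  rcases eq_or_lt_of_le hle with heq | hlt
  · rwa [heq, Nat.sub_self, getVert_zero] at key
  · refine absurd ⟨_, (hp₂A (p₂.length - p₁.length - 1) (by omega)).2 ?_, ?_⟩ hv₁
    · rw [Nat.even_iff] at h₁ h₂
      rw [Nat.odd_iff]
      omega
    · rw [show p₂.length - p₁.length - 1 + 1 = p₂.length - p₁.length by omega, Sym2.mem_iff]
      exact .inr key

theorem exists_augPath_alternates_of_ncard_lt [Fintype V] (hA : IsMatchingSet G A)
    (hB : IsMatchingSet G B) (hlt : A.ncard < B.ncard) :
    ∃ p : AugPath G A, p.walk.Alternates B 1 := by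
  by_contra! hno
  have hend : ∀ v, ∃ x, v ∈ coveredVerts B \ coveredVerts A →
      x ∈ coveredVerts A \ coveredVerts B ∧
        ∃ p : G.Walk v x, Even p.length ∧ p.Alternates A 0 ∧ p.Alternates B 1 := fun v => by
    by_cases hv : v ∈ coveredVerts B \ coveredVerts A
    · obtain ⟨x, hx, hpx⟩ :=
        exists_even_alternates_of_forall_not_alternates hA hB hno hv.1 hv.2
      exact ⟨x, fun _ => ⟨hx, hpx⟩⟩
    · exact ⟨v, fun h => absurd h hv⟩
  choose g hg using hend
  have hinj : Set.InjOn g (coveredVerts B \ coveredVerts A) := fun v₁ hv₁ v₂ hv₂ hg₁₂ => by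
    obtain ⟨-, p₁, h₁, hp₁A, hp₁B⟩ := hg v₁ hv₁
    obtain ⟨-, p₂, h₂, hp₂A, hp₂B⟩ := hg v₂ hv₂
    exact eq_of_even_alternates hA hB hg₁₂ h₁ hp₁A hp₁B h₂ hp₂A hp₂B hv₁.2 hv₂.2
  have hle := Set.ncard_le_ncard_of_injOn g (fun v hv => (hg v hv).1) hinj
  have hcovA := Set.ncard_inter_add_ncard_sdiff_eq_ncard (coveredVerts A) (coveredVerts B)
  have hcovB := Set.ncard_inter_add_ncard_sdiff_eq_ncard (coveredVerts B) (coveredVerts A)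
  rw [hA.ncard_coveredVerts] at hcovA
  rw [hB.ncard_coveredVerts, Set.inter_comm] at hcovB
  omega

theorem le_ncard_symmDiff [Fintype V] (hA : IsMatchingSet G A) {k : ℕ}
    (hk : ∀ p : AugPath G A, k ≤ p.walk.length) :
    ∀ (t : ℕ) {B : Set (Sym2 V)}, IsMatchingSet G B → A.ncard + t ≤ B.ncard →
      t * k ≤ (symmDiff A B).ncard
  | 0, _, _, _ => by simp
  | t + 1, B, hB, hcard => by
    obtain ⟨p, hpB⟩ := exists_augPath_alternates_of_ncard_lt hA hB (by omega)
    obtain ⟨hpath, -, -, -, hpA⟩ := isAugPath_iff.1 p.isAug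
    obtain ⟨hB', hB'card⟩ :=
      hB.symmDiff_edgeSet_of_alternates_one hpath hpB p.isAug.odd_length
    have hsub : p.walk.edgeSet ⊆ symmDiff A B := fun e he => by
      obtain ⟨i, hi, rfl⟩ := mem_edges_iff_exists_getVert.1 he
      rw [Set.mem_symmDiff, hpA i hi, hpB i hi]
      simp only [Nat.odd_iff]
      omega
    have ih := le_ncard_symmDiff hA hk t hB' (by omega)
    rw [← symmDiff_assoc, symmDiff_of_ge hsub, Set.ncard_sdiff hsub, hpath.ncard_edgeSet]
      at ih
    have hlen : p.walk.length ≤ (symmDiff A B).ncard :=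
      hpath.ncard_edgeSet ▸ Set.ncard_le_ncard hsub
    have := hk p
    rw [add_mul, one_mul]
    omega

theorem add_two_le_length_of_inter_nonempty [Fintype V] {M F : Set (Sym2 V)}
    (hM : IsMatchingSet G M) {k m : ℕ} (hk : ∀ p : AugPath G M, k ≤ p.walk.length)
    (hMF : IsMatchingSet G (symmDiff M F)) (hcard : (symmDiff M F).ncard = M.ncard + m)
    (hF : F.ncard ≤ m * k) (q : AugPath G (symmDiff M F))
    (hshare : (F ∩ q.walk.edgeSet).Nonempty) : k + 2 ≤ q.walk.length := by
  obtain ⟨hM'', hM''card⟩ := q.isAug.symmDiff_edgeSet hMF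
  have hlow := le_ncard_symmDiff hM hk (m + 1) hM'' (by omega)
  rw [← symmDiff_assoc, symmDiff_symmDiff_cancel_left, add_mul, one_mul] at hlow
  have hcount := Set.ncard_symmDiff_add_two_mul_ncard_inter F q.walk.edgeSet
  rw [q.isAug.1.ncard_edgeSet] at hcount
  have hshared := (Set.ncard_pos (Set.toFinite _)).2 hshare
  omega

end Exchange

end

/-- Hopcroft–Karp. Let `M` be a matching in a finite simple graph
`G`, let `k` be the length of a shortest `M`-augmenting path, and let `P` be a maximal
(w.r.t. inclusion) family of pairwise vertex-disjoint `M`-augmenting paths of length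
`k`.  Then `M ⊕ E(P)` is a matching and every `M ⊕ E(P)`-augmenting path has length at
least `k + 2`. -/
theorem symmDiff_matching_and_aug_length_ge
    {V : Type*} [Fintype V] (G : SimpleGraph V) (M : Set (Sym2 V))
    (hM : IsMatchingSet G M) (k : ℕ)
    (hex : ∃ p : AugPath G M, p.walk.length = k)
    (hshortest : ∀ p : AugPath G M, k ≤ p.walk.length)
    (m : ℕ) (P : Fin m → AugPath G M)
    (hlen : ∀ i, (P i).walk.length = k)
    (hdisj : ∀ i j, i ≠ j → (P i).VDisj (P j))
    (hmaximal : ∀ q : AugPath G M, q.walk.length = k → ¬ (∀ i, q.VDisj (P i))) :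
    IsMatchingSet G (symmDiff M (famEdges P)) ∧
      ∀ q : AugPath G (symmDiff M (famEdges P)), k + 2 ≤ q.walk.length := by
  obtain ⟨hM', hM'card⟩ := hM.symmDiff_famEdges P hdisj
  refine ⟨hM', fun q => ?_⟩
  by_cases hq : ∀ i, q.VDisj (P i)
  · have hqM : IsAugPath G M q.walk := by
      simpa using q.isAug.symmDiff_of_forall_notMem (F := famEdges P) fun e ⟨i, hi⟩ x hxe hx =>
        hq i x hx (Walk.mem_support_of_mem_edges hi hxe)
    have hne : q.walk.length ≠ k := fun h => hmaximal ⟨_, _, _, hqM⟩ h hq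
    have hk : k ≤ q.walk.length := hshortest ⟨_, _, _, hqM⟩
    obtain ⟨p, rfl⟩ := hex
    have hpodd := p.isAug.odd_length
    have hqodd := q.isAug.odd_length
    simp only [Nat.odd_iff] at hpodd hqodd
    omega
  · obtain ⟨i, hi⟩ := not_forall.1 hq
    obtain ⟨y, hyq, hyP⟩ : ∃ y ∈ q.walk.support, y ∈ (P i).walk.support := by
      simpa [AugPath.VDisj] using hi
    obtain ⟨e, heP, heM, hye⟩ := (P i).isAug.exists_mem_edges_notMem hyP
    have heq : e ∈ q.walk.edges :=
      q.isAug.mem_edges_of_mem hM' (Set.mem_symmDiff.2 (.inr ⟨⟨i, heP⟩, heM⟩)) hye hyq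
    exact add_two_le_length_of_inter_nonempty hM hshortest hM' hM'card
      (by simpa [hlen] using ncard_famEdges_le P) q ⟨e, ⟨i, heP⟩, heq⟩
end
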